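/- (Value of a Gaussian policy, one-step evaluation) Suppose at time t the policy is π_t = N(K(x - ρ_t w), λ B C^{T-t-1}) with K ∈ ℝ, B > 0, C > 0, ρ_t = r_f^{-(T-t)}, and the value at t+1 is J(t+1, y) = A^{T-t-1}(y - ρ_{t+1} w)² + f(t+1) where A = r_f² + (a²+σ²)K² + 2 r_f a K. Then J(t,x) := E[J(t+1, r_f x + r U)] + λ∫π_t ln π_t = A^{T-t}(x - ρ_t w)² + A^{T-t-1}(a²+σ²)λ B C^{T-t-1} - (λ/2) ln(2πλB C^{T-t-1}) - λ/2 + f(t+1), where r has mean a, variance σ², and U ~ π_t is independent of r. -/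

import Mathlib

/-!
Both integrals are expectations of quadratics, so only first and second moments enter. Since
`J(t+1, ·)` is quadratic, the inner Gaussian integral is, for fixed `r`, a quadratic in `r`, and the
outer integral then only sees `E r = a` and `E r² = a² + σ²`. Because `ρ_{t+1} = r_f ρ_t`, the
terms quadratic in `x - ρ_t w` collect into `(r_f² + 2 r_f a K + (a² + σ²) K²) (x - ρ_t w)²`,
which is `A (x - ρ_t w)²`. The entropy term is the same computation for the quadratic
`log π_t(u) = -½ log(2πv) - (u - m)² / (2v)`.
-/

open MeasureTheory Real

/-- Gaussian density with mean `m` and variance `s2`. -/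
noncomputable def gaussPdf (m s2 u : ℝ) : ℝ :=
  (Real.sqrt (2 * Real.pi * s2))⁻¹ * Real.exp (-(u - m) ^ 2 / (2 * s2))

open ProbabilityTheory NNReal

section Quadratic

variable {Ω : Type*} [MeasurableSpace Ω] {μ : Measure Ω} [IsProbabilityMeasure μ] {X : Ω → ℝ}

lemma integral_quadratic (hX : MemLp X 2 μ) (α β γ : ℝ) :
    ∫ ω, α + β * X ω + γ * X ω ^ 2 ∂μ = α + β * ∫ ω, X ω ∂μ + γ * ∫ ω, X ω ^ 2 ∂μ := by
  have hX₁ : Integrable X μ := hX.integrable one_le_two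
  have hX₂ : Integrable (fun ω => X ω ^ 2) μ := hX.integrable_sq
  have hX₀₁ : Integrable (fun ω => α + β * X ω) μ := (integrable_const α).add (hX₁.const_mul β)
  rw [integral_add hX₀₁ (hX₂.const_mul γ), integral_add (integrable_const α) (hX₁.const_mul β),
    integral_const_mul, integral_const_mul, integral_const, probReal_univ, one_smul]

end Quadratic

section Gaussian

variable {v : ℝ} (m : ℝ)

lemma gaussPdf_eq_gaussianPDFReal (hv : 0 ≤ v) : gaussPdf m v = gaussianPDFReal m v.toNNReal := by
  ext u
  simp [gaussPdf, gaussianPDFReal, Real.coe_toNNReal _ hv]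

lemma integral_mul_gaussPdf (hv : 0 < v) (f : ℝ → ℝ) :
    ∫ u, f u * gaussPdf m v u = ∫ u, f u ∂gaussianReal m v.toNNReal := by
  rw [integral_gaussianReal_eq_integral_smul (by simpa using hv),
    gaussPdf_eq_gaussianPDFReal m hv.le]
  simp_rw [smul_eq_mul, mul_comm]

lemma integral_sq_gaussianReal (s : ℝ≥0) : ∫ u, u ^ 2 ∂gaussianReal m s = m ^ 2 + s := by
  have h := variance_eq_sub (memLp_id_gaussianReal (μ := m) (v := s) 2)
  simp only [variance_id_gaussianReal, Pi.pow_apply, id_eq, integral_id_gaussianReal] at h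
  linarith

lemma integral_quadratic_gaussianReal (s : ℝ≥0) (α β γ : ℝ) :
    ∫ u, α + β * u + γ * u ^ 2 ∂gaussianReal m s = α + β * m + γ * (m ^ 2 + s) := by
  simpa [integral_sq_gaussianReal] using integral_quadratic (memLp_id_gaussianReal 2) α β γ

lemma log_gaussPdf (hv : 0 < v) (u : ℝ) :
    Real.log (gaussPdf m v u) = -(1 / 2) * Real.log (2 * π * v) - (u - m) ^ 2 / (2 * v) := by
  rw [gaussPdf, Real.log_mul (by positivity) (Real.exp_ne_zero _), Real.log_exp, Real.log_inv,
    Real.log_sqrt (by positivity)]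
  ring

lemma integral_gaussPdf_mul_log (hv : 0 < v) :
    ∫ u, gaussPdf m v u * Real.log (gaussPdf m v u) = -(1 / 2) * Real.log (2 * π * v) - 1 / 2 := by
  have hlog : ∀ u, Real.log (gaussPdf m v u) =
      (-(1 / 2) * Real.log (2 * π * v) - m ^ 2 / (2 * v)) + m / v * u + -(2 * v)⁻¹ * u ^ 2 := by
    intro u
    rw [log_gaussPdf m hv]
    field_simp
    ring
  simp_rw [mul_comm (gaussPdf m v _), integral_mul_gaussPdf m hv, hlog]
  rw [integral_quadratic_gaussianReal, Real.coe_toNNReal _ hv.le]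
  field_simp
  ring

end Gaussian

theorem stmt9_general {Ω : Type*} [MeasurableSpace Ω] (μ : Measure Ω) [IsProbabilityMeasure μ]
    (r : Ω → ℝ) (hmeas : Measurable r)
    (a σ rf lam w K B C ft1 x : ℝ)
    (hσ : 0 < σ) (hrf : 0 < rf) (hlam : 0 < lam) (hB : 0 < B) (hC : 0 < C)
    (hra : ∫ ω, r ω ∂μ = a) (hrv : ∫ ω, (r ω) ^ 2 ∂μ = a ^ 2 + σ ^ 2)
    (T t : ℕ) (ht : t < T)
    (A : ℝ) (hA : A = rf ^ 2 + (a ^ 2 + σ ^ 2) * K ^ 2 + 2 * rf * a * K) :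
    let ρt : ℝ := (rf⁻¹) ^ (T - t)
    let ρt1 : ℝ := (rf⁻¹) ^ (T - (t + 1))
    let pt : ℝ → ℝ := gaussPdf (K * (x - ρt * w)) (lam * B * C ^ (T - t - 1))
    let Jnext : ℝ → ℝ := fun y => A ^ (T - t - 1) * (y - ρt1 * w) ^ 2 + ft1
    (∫ ω, ∫ u, Jnext (rf * x + r ω * u) * pt u ∂volume ∂μ) +
        lam * ∫ u, pt u * Real.log (pt u) =
      A ^ (T - t) * (x - ρt * w) ^ 2 +
        A ^ (T - t - 1) * (a ^ 2 + σ ^ 2) * (lam * B * C ^ (T - t - 1)) -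
        lam / 2 * Real.log (2 * Real.pi * lam * B * C ^ (T - t - 1)) - lam / 2 + ft1 := by
  intro ρt ρt1 pt Jnext
  set n := T - t - 1
  set v := lam * B * C ^ n
  have hv : 0 < v := by positivity
  set m := K * (x - ρt * w)
  set c := rf * x - ρt1 * w with hc
  have hρ : ρt1 = rf * ρt := by
    simp only [ρt, ρt1, show T - t = T - (t + 1) + 1 by omega, pow_succ]
    field_simp
  have hr : MemLp r 2 μ := (memLp_two_iff_integrable_sq hmeas.aestronglyMeasurable).2
    (.of_integral_ne_zero (by rw [hrv]; positivity))
  have hinner : ∀ R, ∫ u, Jnext (rf * x + R * u) * pt u =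
      (A ^ n * c ^ 2 + ft1) + (2 * A ^ n * c * m) * R + (A ^ n * (m ^ 2 + v)) * R ^ 2 := by
    intro R
    have hJ : ∀ u, Jnext (rf * x + R * u) =
        (A ^ n * c ^ 2 + ft1) + (2 * A ^ n * c * R) * u + (A ^ n * R ^ 2) * u ^ 2 := by
      intro u
      simp only [Jnext, hc]
      ring
    simp_rw [show pt = gaussPdf m v from rfl, integral_mul_gaussPdf m hv, hJ]
    rw [integral_quadratic_gaussianReal, Real.coe_toNNReal _ hv.le]
    ring
  simp_rw [hinner]
  rw [integral_quadratic hr, hra, hrv, integral_gaussPdf_mul_log m hv]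
  have hlogarg : 2 * π * lam * B * C ^ n = 2 * π * v := by ring
  rw [hlogarg, show T - t = n + 1 by omega, hA]
  simp only [c, m, hρ]
  ring

/-- One-step evaluation of a Gaussian policy in the exploratory MV problem. -/
theorem stmt9 {Ω : Type*} [MeasurableSpace Ω] (μ : Measure Ω) [IsProbabilityMeasure μ]
    (r : Ω → ℝ) (hmeas : Measurable r)
    (a σ rf lam w K B C ft1 x : ℝ)
    (hσ : 0 < σ) (hrf : 0 < rf) (hlam : 0 < lam) (hB : 0 < B) (hC : 0 < C)
    (hra : ∫ ω, r ω ∂μ = a) (hrv : ∫ ω, (r ω) ^ 2 ∂μ = a ^ 2 + σ ^ 2)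
    (T t : ℕ) (ht : t < T)
    (A : ℝ) (hA : A = rf ^ 2 + (a ^ 2 + σ ^ 2) * K ^ 2 + 2 * rf * a * K) (hApos : 0 < A) :
    let ρt : ℝ := (rf⁻¹) ^ (T - t)
    let ρt1 : ℝ := (rf⁻¹) ^ (T - (t + 1))
    let pt : ℝ → ℝ := gaussPdf (K * (x - ρt * w)) (lam * B * C ^ (T - t - 1))
    let Jnext : ℝ → ℝ := fun y => A ^ (T - t - 1) * (y - ρt1 * w) ^ 2 + ft1
    (∫ ω, ∫ u, Jnext (rf * x + r ω * u) * pt u ∂volume ∂μ) +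
        lam * ∫ u, pt u * Real.log (pt u) =
      A ^ (T - t) * (x - ρt * w) ^ 2 +
        A ^ (T - t - 1) * (a ^ 2 + σ ^ 2) * (lam * B * C ^ (T - t - 1)) -
        lam / 2 * Real.log (2 * Real.pi * lam * B * C ^ (T - t - 1)) - lam / 2 + ft1 :=
  stmt9_general μ r hmeas a σ rf lam w K B C ft1 x hσ hrf hlam hB hC hra hrv T t ht A hA
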